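/- arXiv:1307.2301 — 3 statements merged into one kernel-verified Lean document; each statement's English description precedes it below -/
import Mathlib

section
/- Let 0<s<1 and m>0. For every μ with 0 ≤ μ < N+2s there exists a constant C>0 such that for every measurable function g on ℝ^N with ‖(1+|x|)^μ g‖_{L^∞(ℝ^N)} < ∞, one has ‖(1+|x|)^μ T_m[g]‖_{L^∞(ℝ^N)} ≤ C‖(1+|x|)^μ g‖_{L^∞(ℝ^N)}. In particular, there exists C>0 with T_m[(1+|x|)^{-μ}](x) ≤ C(1+|x|)^{-μ} for all x∈ℝ^N. -/
open MeasureTheory Filter Set Metric Bornology Topology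

noncomputable section

abbrev EucN (N : ℕ) := EuclideanSpace ℝ (Fin N)

/-- The Fourier transform of a real-valued function on `ℝ^N`. -/
def FT {N : ℕ} (u : EucN N → ℝ) : EucN N → ℂ :=
  VectorFourier.fourierIntegral Real.fourierChar volume (innerₗ (EucN N)) (fun x => (u x : ℂ))

/-- `u ∈ H^{2s}(ℝ^N)`: `u ∈ L²` and `∫ (1+|ξ|^{4s}) |û(ξ)|² < ∞`. -/
def MemH2s {N : ℕ} (s : ℝ) (u : EucN N → ℝ) : Prop :=
  MeasureTheory.MemLp u 2 (volume : Measure (EucN N)) ∧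
    MeasureTheory.Integrable
      (fun ξ : EucN N => (1 + ‖ξ‖ ^ (4 * s)) * ‖FT u ξ‖ ^ 2)

/-- `v = (-Δ)^s u`, defined through the Fourier relation `v̂(ξ) = |ξ|^{2s} û(ξ)`. -/
def IsFracLap {N : ℕ} (s : ℝ) (u v : EucN N → ℝ) : Prop :=
  MeasureTheory.MemLp v 2 (volume : Measure (EucN N)) ∧
    ∀ᵐ ξ : EucN N, FT v ξ = ((‖ξ‖ ^ (2 * s) : ℝ) : ℂ) * FT u ξ

/-- Subcriticality of the exponent `p`. -/
def Subcritical (N : ℕ) (s p : ℝ) : Prop :=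
  1 < p ∧ (2 * s < N → p < ((N : ℝ) + 2 * s) / ((N : ℝ) - 2 * s))

/-- `V ∈ C^{1,α}(ℝ^N) ∩ L^∞(ℝ^N)` with `inf V > 0`. -/
def VCond {N : ℕ} (V : EucN N → ℝ) : Prop :=
  ContDiff ℝ 1 V ∧
    (∃ α : ℝ, 0 < α ∧ α ≤ 1 ∧ ∃ C : NNReal, HolderWith C α.toNNReal (fderiv ℝ V)) ∧
    (∃ M, ∀ x, |V x| ≤ M) ∧ (∃ m, 0 < m ∧ ∀ x, m ≤ V x)

/-- The rescaled ground state `w_λ(x) = λ^{1/(p-1)} w(λ^{1/(2s)} x)`. -/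
def wlam {N : ℕ} (s p : ℝ) (w : EucN N → ℝ) (lam : ℝ) (x : EucN N) : ℝ :=
  lam ^ (1 / (p - 1)) * w ((lam ^ (1 / (2 * s))) • x)

/-- A nondegenerate positive radial ground state of `(-Δ)^s w + w - w^p = 0`. -/
structure IsGroundState (N : ℕ) (s p : ℝ) (w : EucN N → ℝ) : Prop where
  pos : ∀ x, 0 < w x
  radial : ∀ x y : EucN N, ‖x‖ = ‖y‖ → w x = w y
  mem : MemH2s s w
  smooth : ContDiff ℝ 1 w
  eq : ∃ Lw : EucN N → ℝ, IsFracLap s w Lw ∧ ∀ᵐ x : EucN N, Lw x + w x - w x ^ p = 0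
  nondeg : ∀ φ : EucN N → ℝ, MemH2s s φ →
    (∃ Lφ : EucN N → ℝ, IsFracLap s φ Lφ ∧
      ∀ᵐ x : EucN N, Lφ x + φ x - p * w x ^ (p - 1) * φ x = 0) →
    ∃ c : Fin N → ℝ, ∀ᵐ x : EucN N,
      φ x = ∑ j, c j * fderiv ℝ w x (EuclideanSpace.single j (1 : ℝ))
  decay : ∃ c₀, 0 < c₀ ∧ Tendsto (fun x : EucN N => w x * ‖x‖ ^ ((N : ℝ) + 2 * s))
    (cocompact (EucN N)) (𝓝 c₀)

/-- `u` is a (positive, bounded, `H^{2s}`) solution of `ε^{2s}(-Δ)^s u + V u - u^p = 0`. -/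
def SolvesEps {N : ℕ} (s p ε : ℝ) (V u : EucN N → ℝ) : Prop :=
  MemH2s s u ∧ (∃ C, ∀ x, |u x| ≤ C) ∧ (∀ x, 0 < u x) ∧
    ∃ Lu : EucN N → ℝ, IsFracLap s u Lu ∧
      ∀ᵐ x : EucN N, ε ^ (2 * s) * Lu x + V x * u x - u x ^ p = 0

/-- The square of the `H^{2s}` norm. -/
def H2sNormSq {N : ℕ} (s : ℝ) (u : EucN N → ℝ) : ℝ :=
  ∫ ξ : EucN N, (1 + ‖ξ‖ ^ (4 * s)) * ‖FT u ξ‖ ^ 2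

/-!
Let `k ∈ L¹` decay like `‖y‖ ^ (-p)` at infinity, with `p` larger than the dimension and
`0 ≤ μ ≤ p`, and split the convolution integral at `‖z‖ = ‖x‖ / 2`. Where `z` is far from the
origin, the weight `(1 + ‖z‖) ^ (-μ)` is already comparable to `(1 + ‖x‖) ^ (-μ)` and the kernel
contributes only its `L¹` norm. Where `z` is close to the origin, `x - z` is large, so the kernel
is bounded by `‖x‖ ^ (-p)`; trading `(1 + ‖z‖) ^ (p - μ)` for `(1 + ‖x‖) ^ (p - μ)` leaves the
weight `(1 + ‖z‖) ^ (-p)`, integrable because `p` exceeds the dimension, and a factor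
`(1 + ‖x‖) ^ (-μ)`.
-/

theorem Real.rpow_neg_le_rpow_mul_rpow_neg {a b t μ : ℝ} (ha : 0 < a) (hb : 0 < b)
    (hbt : b ≤ a * t) (hμ : 0 ≤ μ) : t ^ (-μ) ≤ a ^ μ * b ^ (-μ) :=
  calc t ^ (-μ) ≤ (b / a) ^ (-μ) :=
        Real.rpow_le_rpow_of_nonpos (div_pos hb ha) ((div_le_iff₀' ha).2 hbt) (neg_nonpos.2 hμ)
    _ = a ^ μ * b ^ (-μ) := by
        rw [Real.div_rpow hb.le ha.le, Real.rpow_neg ha.le, div_inv_eq_mul, mul_comm]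

section Decay

variable {E : Type*} [NormedAddCommGroup E]

theorem isBigO_rpow_neg_of_tendsto_mul_rpow {k : E → ℝ} {p γ : ℝ}
    (h : Tendsto (fun y => k y * ‖y‖ ^ p) (cocompact E) (𝓝 γ)) :
    k =O[cocompact E] fun y => ‖y‖ ^ (-p) := by
  refine ((h.isBigO_one ℝ).mul (Asymptotics.isBigO_refl (fun y => ‖y‖ ^ (-p)) _)).congr'
    ?_ (.of_forall fun _ => one_mul _)
  filter_upwards [(isCompact_singleton (x := (0 : E))).compl_mem_cocompact] with y (hy : y ≠ 0)
  rw [Real.rpow_neg (norm_nonneg y), mul_assoc,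
    mul_inv_cancel₀ (Real.rpow_pos_of_pos (norm_pos_iff.2 hy) p).ne', mul_one]

theorem exists_forall_abs_le_of_isBigO_rpow_neg [ProperSpace E] {k : E → ℝ} {p : ℝ}
    (h : k =O[cocompact E] fun y => ‖y‖ ^ (-p)) :
    ∃ c R, 0 ≤ c ∧ 1 ≤ R ∧ ∀ y, R ≤ ‖y‖ → |k y| ≤ c * ‖y‖ ^ (-p) := by
  obtain ⟨c, hc, hcO⟩ := h.exists_nonneg
  have hbound := hcO.bound
  rw [← cobounded_eq_cocompact, ← comap_norm_atTop, eventually_comap, eventually_atTop] at hbound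
  obtain ⟨R, hR⟩ := hbound
  refine ⟨c, max R 1, hc, le_max_right _ _, fun y hy => ?_⟩
  simpa [abs_of_nonneg (Real.rpow_nonneg (norm_nonneg y) _)] using
    hR ‖y‖ (le_of_max_le_left hy) y rfl

theorem abs_apply_sub_mul_one_add_norm_rpow_neg_le {k : E → ℝ} {c R p μ : ℝ} (hc : 0 ≤ c)
    (hR : 1 ≤ R) (hμ0 : 0 ≤ μ) (hμp : μ ≤ p) (hk : ∀ y, R ≤ ‖y‖ → |k y| ≤ c * ‖y‖ ^ (-p))
    (x z : E) :
    |k (x - z)| * (1 + ‖z‖) ^ (-μ) ≤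
      (1 + ‖x‖) ^ (-μ) * (c * 4 ^ p * (1 + ‖z‖) ^ (-p) + (1 + 2 * R) ^ μ * |k (x - z)|) := by
  have hx : 0 < 1 + ‖x‖ := by positivity
  have hz : 0 < 1 + ‖z‖ := by positivity
  by_cases hnear : 2 * R < ‖x‖ ∧ 2 * ‖z‖ ≤ ‖x‖
  · obtain ⟨hxR, hzx⟩ := hnear
    have hxz : ‖x‖ ≤ 2 * ‖x - z‖ := by linarith [norm_sub_norm_le x z]
    have hkernel : |k (x - z)| ≤ c * 4 ^ p * (1 + ‖x‖) ^ (-p) :=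
      calc |k (x - z)| ≤ c * ‖x - z‖ ^ (-p) := hk _ (by linarith)
        _ ≤ c * (4 ^ p * (1 + ‖x‖) ^ (-p)) := by
            gcongr
            exact Real.rpow_neg_le_rpow_mul_rpow_neg (by norm_num) hx (by linarith) (by linarith)
        _ = c * 4 ^ p * (1 + ‖x‖) ^ (-p) := by ring
    have hweight : (1 + ‖z‖) ^ (-μ) ≤ (1 + ‖x‖) ^ (p - μ) * (1 + ‖z‖) ^ (-p) :=
      calc (1 + ‖z‖) ^ (-μ) = (1 + ‖z‖) ^ (p - μ) * (1 + ‖z‖) ^ (-p) := by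
            rw [← Real.rpow_add hz]; ring_nf
        _ ≤ (1 + ‖x‖) ^ (p - μ) * (1 + ‖z‖) ^ (-p) := by
            gcongr; linarith
    calc |k (x - z)| * (1 + ‖z‖) ^ (-μ)
        ≤ c * 4 ^ p * (1 + ‖x‖) ^ (-p) * ((1 + ‖x‖) ^ (p - μ) * (1 + ‖z‖) ^ (-p)) := by
          gcongr
      _ = (1 + ‖x‖) ^ (-μ) * (c * 4 ^ p * (1 + ‖z‖) ^ (-p)) := by
          rw [show (1 + ‖x‖) ^ (-μ) = (1 + ‖x‖) ^ (-p) * (1 + ‖x‖) ^ (p - μ) by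
            rw [← Real.rpow_add hx]; ring_nf]
          ring
      _ ≤ _ := by
          gcongr
          exact le_add_of_nonneg_right (by positivity)
  · have hxz : 1 + ‖x‖ ≤ (1 + 2 * R) * (1 + ‖z‖) := by
      rw [not_and_or, not_lt, not_le] at hnear
      rcases hnear with h | h <;> nlinarith [norm_nonneg z]
    calc |k (x - z)| * (1 + ‖z‖) ^ (-μ)
        ≤ |k (x - z)| * ((1 + 2 * R) ^ μ * (1 + ‖x‖) ^ (-μ)) := by
          gcongr
          exact Real.rpow_neg_le_rpow_mul_rpow_neg (by linarith) hx hxz hμ0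
      _ = (1 + ‖x‖) ^ (-μ) * ((1 + 2 * R) ^ μ * |k (x - z)|) := by ring
      _ ≤ _ := by
          gcongr
          exact le_add_of_nonneg_left (by positivity)

end Decay

section Convolution

variable {E : Type*} [NormedAddCommGroup E] [NormedSpace ℝ E] [FiniteDimensional ℝ E]
  [MeasurableSpace E] [BorelSpace E] (ν : Measure E) [ν.IsAddHaarMeasure]

theorem integrable_abs_apply_sub_mul_one_add_norm_rpow_neg {k : E → ℝ} {μ : ℝ}
    (hk : Integrable k ν) (hμ0 : 0 ≤ μ) (x : E) :
    Integrable (fun z => |k (x - z)| * (1 + ‖z‖) ^ (-μ)) ν :=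
  (hk.comp_sub_left x).abs.mul_bdd (Measurable.aestronglyMeasurable (by fun_prop)) <|
    .of_forall fun z => by
      rw [Real.norm_of_nonneg (by positivity)]
      exact Real.rpow_le_one_of_one_le_of_nonpos (by simp) (neg_nonpos.2 hμ0)

theorem abs_integral_apply_sub_mul_le {k g : E → ℝ} {M μ : ℝ} (hk : Integrable k ν)
    (hμ0 : 0 ≤ μ) (hg : ∀ z, |g z| ≤ M * (1 + ‖z‖) ^ (-μ)) (x : E) :
    |∫ z, k (x - z) * g z ∂ν| ≤ M * ∫ z, |k (x - z)| * (1 + ‖z‖) ^ (-μ) ∂ν := by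
  rw [← Real.norm_eq_abs]
  refine (norm_integral_le_of_norm_le
    ((integrable_abs_apply_sub_mul_one_add_norm_rpow_neg ν hk hμ0 x).const_mul M)
    (.of_forall fun z => ?_)).trans_eq (integral_const_mul M _)
  calc ‖k (x - z) * g z‖ = |k (x - z)| * |g z| := by
        rw [norm_mul, Real.norm_eq_abs, Real.norm_eq_abs]
    _ ≤ |k (x - z)| * (M * (1 + ‖z‖) ^ (-μ)) := by gcongr; exact hg z
    _ = M * (|k (x - z)| * (1 + ‖z‖) ^ (-μ)) := by ring

theorem exists_integral_abs_apply_sub_mul_one_add_norm_rpow_neg_le {k : E → ℝ} {p μ : ℝ}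
    (hk : Integrable k ν) (hdecay : k =O[cocompact E] fun y => ‖y‖ ^ (-p))
    (hp : (Module.finrank ℝ E : ℝ) < p) (hμ0 : 0 ≤ μ) (hμp : μ ≤ p) :
    ∃ C > 0, ∀ x, ∫ z, |k (x - z)| * (1 + ‖z‖) ^ (-μ) ∂ν ≤ C * (1 + ‖x‖) ^ (-μ) := by
  obtain ⟨c, R, hc, hR, hkR⟩ := exists_forall_abs_le_of_isBigO_rpow_neg hdecay
  set A := c * 4 ^ p * ∫ z, (1 + ‖z‖) ^ (-p) ∂ν
  set B := (1 + 2 * R) ^ μ * ∫ y, |k y| ∂ν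
  refine ⟨A + B + 1, by positivity, fun x => ?_⟩
  have hweight := (integrable_one_add_norm (μ := ν) hp).const_mul (c * 4 ^ p)
  have hkx := ((hk.comp_sub_left x).abs).const_mul ((1 + 2 * R) ^ μ)
  calc ∫ z, |k (x - z)| * (1 + ‖z‖) ^ (-μ) ∂ν
      ≤ ∫ z, (1 + ‖x‖) ^ (-μ) *
          (c * 4 ^ p * (1 + ‖z‖) ^ (-p) + (1 + 2 * R) ^ μ * |k (x - z)|) ∂ν :=
        integral_mono (integrable_abs_apply_sub_mul_one_add_norm_rpow_neg ν hk hμ0 x)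
          ((hweight.add hkx).const_mul _)
          (abs_apply_sub_mul_one_add_norm_rpow_neg_le hc hR hμ0 hμp hkR x)
    _ = (A + B) * (1 + ‖x‖) ^ (-μ) := by
        rw [integral_const_mul, integral_add hweight hkx, integral_const_mul, integral_const_mul,
          integral_sub_left_eq_self (fun y => |k y|) ν x]
        ring
    _ ≤ (A + B + 1) * (1 + ‖x‖) ^ (-μ) :=
        mul_le_mul_of_nonneg_right (by linarith) (by positivity)

end Convolution

theorem stmt7_general {N : ℕ} (s m : ℝ) (hs : 0 < s) (hm : 0 < m)
    (km : EucN N → ℝ)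
    (hkmint : ∫ x : EucN N, km x = 1 / m)
    (hfar : ∃ γ : ℝ, 0 < γ ∧
      Tendsto (fun x : EucN N => km x * ‖x‖ ^ ((N : ℝ) + 2 * s))
        (cocompact (EucN N)) (𝓝 γ))
    (μ : ℝ) (hμ0 : 0 ≤ μ) (hμ : μ < (N : ℝ) + 2 * s) :
    ∃ C > (0 : ℝ),
      (∀ g : EucN N → ℝ, Measurable g → ∀ M : ℝ,
        (∀ x, |g x| ≤ M * (1 + ‖x‖) ^ (-μ)) →
        ∀ x : EucN N, |∫ z : EucN N, km (x - z) * g z| ≤ C * M * (1 + ‖x‖) ^ (-μ)) ∧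
      (∀ x : EucN N,
        (∫ z : EucN N, km (x - z) * (1 + ‖z‖) ^ (-μ)) ≤ C * (1 + ‖x‖) ^ (-μ)) := by
  -- a non-integrable function would have Bochner integral `0 ≠ 1 / m`
  have hint : Integrable km := by
    by_contra h
    rw [integral_undef h] at hkmint
    exact (one_div_pos.2 hm).ne hkmint
  obtain ⟨γ, -, hγ⟩ := hfar
  obtain ⟨C, hC, hbound⟩ := exists_integral_abs_apply_sub_mul_one_add_norm_rpow_neg_le volume hint
    (isBigO_rpow_neg_of_tendsto_mul_rpow hγ) (by rw [finrank_euclideanSpace_fin]; linarith)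
    hμ0 hμ.le
  have hweighted : ∀ (g : EucN N → ℝ) (M : ℝ), (∀ x, |g x| ≤ M * (1 + ‖x‖) ^ (-μ)) →
      ∀ x, |∫ z, km (x - z) * g z| ≤ C * M * (1 + ‖x‖) ^ (-μ) := by
    intro g M hg x
    have hM : 0 ≤ M := by simpa using (abs_nonneg _).trans (hg 0)
    calc |∫ z, km (x - z) * g z|
        ≤ M * ∫ z, |km (x - z)| * (1 + ‖z‖) ^ (-μ) :=
          abs_integral_apply_sub_mul_le volume hint hμ0 hg x
      _ ≤ M * (C * (1 + ‖x‖) ^ (-μ)) := by gcongr; exact hbound x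
      _ = C * M * (1 + ‖x‖) ^ (-μ) := by ring
  refine ⟨C, hC, fun g _ => hweighted g, fun x => ?_⟩
  simpa using (le_abs_self _).trans
    (hweighted _ 1 (fun z => by rw [one_mul, abs_of_nonneg (by positivity)]) x)

/-- Lemma 2: weighted `L^∞` estimate for `T_m[g] = k_m * g`. -/
theorem stmt7 {N : ℕ} (s m : ℝ) (hs : 0 < s) (hs1 : s < 1) (hm : 0 < m)
    (km : EucN N → ℝ)
    (hkmFT : ∀ ξ : EucN N, FT km ξ = (((‖ξ‖ ^ (2 * s) + m)⁻¹ : ℝ) : ℂ))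
    (hkmpos : ∀ x : EucN N, x ≠ 0 → 0 < km x)
    (hkmrad : ∀ x y : EucN N, ‖x‖ = ‖y‖ → km x = km y)
    (hkmint : ∫ x : EucN N, km x = 1 / m)
    (hnear : ∃ C : ℝ, ∀ x : EucN N, x ≠ 0 → ‖x‖ ≤ 1 →
      |km x| ≤ C * ‖x‖ ^ (-((N : ℝ) - 2 * s)))
    (hfar : ∃ γ : ℝ, 0 < γ ∧
      Tendsto (fun x : EucN N => km x * ‖x‖ ^ ((N : ℝ) + 2 * s))
        (cocompact (EucN N)) (𝓝 γ))
    (μ : ℝ) (hμ0 : 0 ≤ μ) (hμ : μ < (N : ℝ) + 2 * s) :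
    ∃ C > (0 : ℝ),
      (∀ g : EucN N → ℝ, Measurable g → ∀ M : ℝ,
        (∀ x, |g x| ≤ M * (1 + ‖x‖) ^ (-μ)) →
        ∀ x : EucN N, |∫ z : EucN N, km (x - z) * g z| ≤ C * M * (1 + ‖x‖) ^ (-μ)) ∧
      (∀ x : EucN N,
        (∫ z : EucN N, km (x - z) * (1 + ‖z‖) ^ (-μ)) ≤ C * (1 + ‖x‖) ^ (-μ)) :=
  stmt7_general s m hs hm km hkmint hfar μ hμ0 hμ
end
end

section
/- Let 0<s<1, p subcritical, V∈C^{1,α}(ℝ^N)∩L^∞(ℝ^N) with inf V>0, and w a nondegenerate positive radial ground state of (-Δ)^s w + w - w^p = 0. Fix N/2 < μ < (N+2s)/2 and points q_1,…,q_k with R := min_{i≠j}|q_i-q_j| ≫ 1 and λ_i = V(εq_i). Then the error E = Σ_{j=1}^k(λ_j - V(εx))w_{λ_j}(x-q_j) + (Σ_{j=1}^k w_{λ_j}(x-q_j))^p - Σ_{j=1}^k w_{λ_j}(x-q_j)^p satisfies ‖E‖_Y ≤ C ε^{min(2s,1)} + C R^{μ-N-2s} for a constant C independent of ε and of the points q_i.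 -/
open MeasureTheory Filter Set Metric Bornology Topology

noncomputable section

/-- The weight `ρ(x) = Σ_i (1+|x-q_i|)^{-μ}`. -/
def rho {N k : ℕ} (μ : ℝ) (q : Fin k → EucN N) (x : EucN N) : ℝ :=
  ∑ i, (1 + ‖x - q i‖) ^ (-μ)

/-- The ansatz `W_q = Σ_i w_{λ_i}(· - q_i)`, `λ_i = V(ε q_i)`. -/
def Wq {N k : ℕ} (s p ε : ℝ) (w V : EucN N → ℝ) (q : Fin k → EucN N) (x : EucN N) : ℝ :=
  ∑ i, wlam s p w (V (ε • q i)) (x - q i)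

/-- `Z_{ij}(x) = ∂_j w_λ(x - q_i)`. -/
def Zf {N : ℕ} (s p : ℝ) (w : EucN N → ℝ) (lam : ℝ) (qi : EucN N) (j : Fin N)
    (x : EucN N) : ℝ :=
  fderiv ℝ (wlam s p w lam) (x - qi) (EuclideanSpace.single j (1 : ℝ))

/-- The error term `E = Σ_j (λ_j - V(εx)) w_j + (Σ_j w_j)^p - Σ_j w_j^p`. -/
def Efun {N k : ℕ} (s p ε : ℝ) (w V : EucN N → ℝ) (q : Fin k → EucN N) (x : EucN N) : ℝ :=
  (∑ j, (V (ε • q j) - V (ε • x)) * wlam s p w (V (ε • q j)) (x - q j))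
    + (∑ j, wlam s p w (V (ε • q j)) (x - q j)) ^ p
    - ∑ j, (wlam s p w (V (ε • q j)) (x - q j)) ^ p

/-- The nonlinear term `N(φ) = (W_q + φ)_+^p - p W_q^{p-1} φ - W_q^p`. -/
def Nfun {N : ℕ} (p : ℝ) (Wv φ : EucN N → ℝ) (x : EucN N) : ℝ :=
  max (Wv x + φ x) 0 ^ p - p * Wv x ^ (p - 1) * φ x - Wv x ^ p
/-!
The error splits into the potential part `∑ (λ_j - V(εx)) w_j` and the interaction
`(∑ w_j)^p - ∑ w_j^p`, where `w_j = w_{λ_j}(· - q_j)` decays like `(1 + |x - q_j|)^{-(N+2s)}`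
uniformly in `λ_j ∈ [inf V, sup V]`.

Since `V` is bounded and Lipschitz, `|λ_j - V(εx)| ≲ min(1, ε|x - q_j|) ≤ (ε|x - q_j|)^σ`
with `σ = min(2s, 1)`; because `μ + σ ≤ N + 2s` (for `N ≥ 1`), the decay of `w_j` absorbs
`|x - q_j|^σ` and leaves the weight `(1 + |x - q_j|)^{-μ}`.

For the interaction, convexity of `t ↦ t^p` bounds it by products `w_max^{p-1} w_j` of two
distinct bumps. One of the two centres lies at distance at least `R/2` from `x`, and trading
the surplus decay `N + 2s - μ` of that bump for powers of `R` gives the factor `R^{μ-N-2s}`.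
-/

open scoped NNReal

namespace Real

lemma min_le_rpow_mul_rpow {A B σ : ℝ} (hA : 0 ≤ A) (hB : 0 ≤ B) (hσ0 : 0 ≤ σ)
    (hσ1 : σ ≤ 1) : min A B ≤ A ^ (1 - σ) * B ^ σ := by
  have hm : 0 ≤ min A B := le_min hA hB
  calc min A B = min A B ^ (1 - σ) * min A B ^ σ := by
        rw [← rpow_add' hm (by norm_num), sub_add_cancel, rpow_one]
    _ ≤ A ^ (1 - σ) * B ^ σ :=
        mul_le_mul (rpow_le_rpow hm (min_le_left A B) (by linarith))
          (rpow_le_rpow hm (min_le_right A B) hσ0) (by positivity) (by positivity)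

lemma rpow_sub_rpow_le_mul {x y p : ℝ} (hy : 0 ≤ y) (hyx : y ≤ x) (hp : 1 ≤ p) :
    x ^ p - y ^ p ≤ p * x ^ (p - 1) * (x - y) := by
  rcases (hy.trans hyx).eq_or_lt' with rfl | hx
  · simp [le_antisymm hyx hy]
  -- Bernoulli's inequality at `y / x - 1` is the tangent line of `t ↦ t ^ p` at `x`
  have hB := one_add_mul_self_le_rpow_one_add (s := y / x - 1)
    (by linarith [div_nonneg hy hx.le]) hp
  rw [add_sub_cancel, div_rpow hy hx.le, le_div_iff₀ (rpow_pos_of_pos hx p)] at hB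
  have hxp : x ^ p = x ^ (p - 1) * x := by rw [← rpow_add_one hx.ne', sub_add_cancel]
  have : (1 + p * (y / x - 1)) * x ^ p = x ^ p - p * x ^ (p - 1) * (x - y) := by
    rw [hxp]; field_simp; ring
  linarith

lemma sum_rpow_le_rpow_sum {ι : Type*} (s : Finset ι) {f : ι → ℝ} {p : ℝ}
    (hf : ∀ i, 0 ≤ f i) (hp : 1 ≤ p) : ∑ i ∈ s, f i ^ p ≤ (∑ i ∈ s, f i) ^ p := by
  classical
  induction s using Finset.induction_on with
  | empty => simp [zero_rpow (by linarith : p ≠ 0)]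
  | insert i s hi ih =>
    rw [Finset.sum_insert hi, Finset.sum_insert hi]
    exact (add_le_add_right ih _).trans
      (add_rpow_le_rpow_add (hf i) (Finset.sum_nonneg fun j _ => hf j) hp)

lemma rpow_mul_one_add_rpow_neg_le {t σ μ ν : ℝ} (ht : 0 ≤ t) (hσ : 0 ≤ σ)
    (h : μ + σ ≤ ν) : t ^ σ * (1 + t) ^ (-ν) ≤ (1 + t) ^ (-μ) := by
  have ht1 : 0 < 1 + t := by linarith
  calc t ^ σ * (1 + t) ^ (-ν) ≤ (1 + t) ^ σ * (1 + t) ^ (-ν) := by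
        gcongr; linarith
    _ = (1 + t) ^ (σ - ν) := by rw [← rpow_add ht1]; ring_nf
    _ ≤ (1 + t) ^ (-μ) := rpow_le_rpow_of_exponent_le (by linarith) (by linarith)

lemma max_rpow_neg_le {d₁ d₂ R μ ν : ℝ} (h₁ : 0 < d₁) (h₂ : 0 < d₂) (hR : 0 < R)
    (hRd : R ≤ d₁ + d₂) (hμ : 0 ≤ μ) (hμν : μ ≤ ν) :
    max d₁ d₂ ^ (-ν) ≤ 2 ^ (ν - μ) * R ^ (μ - ν) * min d₁ d₂ ^ (-μ) := by
  have hmin : 0 < min d₁ d₂ := lt_min h₁ h₂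
  have hmax : 0 < max d₁ d₂ := lt_max_of_lt_left h₁
  have hR2 : R / 2 ≤ max d₁ d₂ := by linarith [le_max_left d₁ d₂, le_max_right d₁ d₂]
  calc max d₁ d₂ ^ (-ν) = max d₁ d₂ ^ (μ - ν) * max d₁ d₂ ^ (-μ) := by
        rw [← rpow_add hmax]; ring_nf
    _ ≤ (R / 2) ^ (μ - ν) * min d₁ d₂ ^ (-μ) :=
        mul_le_mul (rpow_le_rpow_of_nonpos (by positivity) hR2 (by linarith))
          (rpow_le_rpow_of_nonpos hmin min_le_max (by linarith)) (by positivity)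
          (by positivity)
    _ = 2 ^ (ν - μ) * R ^ (μ - ν) * min d₁ d₂ ^ (-μ) := by
        rw [div_rpow hR.le zero_le_two, div_eq_mul_inv, ← rpow_neg zero_le_two, neg_sub]
        ring

end Real

section BoundedHolderDerivative

variable {E F : Type*} [NormedAddCommGroup E] [NormedSpace ℝ E] [NormedAddCommGroup F]
  [NormedSpace ℝ F] {f : E → F} {M : ℝ} {C r : ℝ≥0}

lemma norm_fderiv_le_of_bounded_of_holderWith (hf : Differentiable ℝ f)
    (hM : ∀ x, ‖f x‖ ≤ M) (hH : HolderWith C r (fderiv ℝ f)) (x : E) :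
    ‖fderiv ℝ f x‖ ≤ 2 * M + C := by
  have hM0 : 0 ≤ M := (norm_nonneg _).trans (hM x)
  refine ContinuousLinearMap.opNorm_le_of_unit_norm (by positivity) fun u hu => ?_
  have hclose : ‖f (x + u) - f x - fderiv ℝ f x (x + u - x)‖ ≤ C * ‖x + u - x‖ :=
    (convex_closedBall x 1).norm_image_sub_le_of_norm_fderiv_le' (fun z _ => hf z)
      (fun z hz => by
        calc ‖fderiv ℝ f z - fderiv ℝ f x‖ ≤ C * dist z x ^ (r : ℝ) := by
              rw [← dist_eq_norm]; exact hH.dist_le z x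
          _ ≤ C * 1 := by
              gcongr; exact Real.rpow_le_one dist_nonneg (mem_closedBall.mp hz) r.coe_nonneg
          _ = C := mul_one _)
      (mem_closedBall_self zero_le_one) (by simp [hu])
  rw [add_sub_cancel_left, hu, mul_one] at hclose
  calc ‖fderiv ℝ f x u‖
        ≤ ‖f (x + u) - f x‖ + ‖f (x + u) - f x - fderiv ℝ f x u‖ := by
        simpa using norm_sub_le (f (x + u) - f x) (f (x + u) - f x - fderiv ℝ f x u)
    _ ≤ (‖f (x + u)‖ + ‖f x‖) + C := add_le_add (norm_sub_le _ _) hclose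
    _ ≤ 2 * M + C := by linarith [hM (x + u), hM x]

lemma exists_lipschitzWith_of_bounded_of_holderWith (hf : Differentiable ℝ f)
    (hM : ∀ x, ‖f x‖ ≤ M) (hH : HolderWith C r (fderiv ℝ f)) : ∃ K, LipschitzWith K f :=
  ⟨_, lipschitzWith_of_nnnorm_fderiv_le hf fun x => by
    rw [← NNReal.coe_le_coe, coe_nnnorm]
    exact (norm_fderiv_le_of_bounded_of_holderWith hf hM hH x).trans (Real.le_coe_toNNReal _)⟩

end BoundedHolderDerivative

lemma VCond.exists_lipschitzWith {N : ℕ} {V : EucN N → ℝ} (hV : VCond V) :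
    ∃ K, LipschitzWith K V := by
  obtain ⟨hV1, ⟨_, -, -, C, hH⟩, ⟨M, hM⟩, -⟩ := hV
  exact exists_lipschitzWith_of_bounded_of_holderWith (hV1.differentiable one_ne_zero)
    (fun x => (Real.norm_eq_abs (V x)).trans_le (hM x)) hH

lemma exists_abs_le_mul_one_add_norm_rpow_neg {E : Type*} [NormedAddCommGroup E] [ProperSpace E]
    {f : E → ℝ} {ν c : ℝ} (hf : Continuous f) (hν : 0 ≤ ν)
    (hlim : Tendsto (fun x => f x * ‖x‖ ^ ν) (cocompact E) (𝓝 c)) :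
    ∃ C, ∀ y, |f y| ≤ C * (1 + ‖y‖) ^ (-ν) := by
  set g : E → ℝ := fun y => f y * (1 + ‖y‖) ^ ν
  have hg : Continuous g :=
    hf.mul ((continuous_const.add continuous_norm).rpow_const fun _ => Or.inr hν)
  have hgO : g =O[cocompact E] (1 : E → ℝ) := by
    refine Asymptotics.IsBigO.of_bound (2 ^ ν * (|c| + 1)) ?_
    filter_upwards [hlim.abs.eventually_lt_const (lt_add_one |c|),
      tendsto_norm_cocompact_atTop.eventually_ge_atTop 1] with y hfy hy
    have h2y : (1 + ‖y‖) ^ ν ≤ 2 ^ ν * ‖y‖ ^ ν := by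
      rw [← Real.mul_rpow zero_le_two (norm_nonneg y)]
      exact Real.rpow_le_rpow (by positivity) (by linarith) hν
    rw [abs_mul, abs_of_nonneg (Real.rpow_nonneg (norm_nonneg y) ν)] at hfy
    calc ‖g y‖ = |f y| * (1 + ‖y‖) ^ ν := by
          rw [Real.norm_eq_abs, abs_mul, abs_of_nonneg (Real.rpow_nonneg (by positivity) ν)]
      _ ≤ |f y| * (2 ^ ν * ‖y‖ ^ ν) := by gcongr
      _ ≤ 2 ^ ν * (|c| + 1) * ‖(1 : E → ℝ) y‖ := by
          rw [Pi.one_apply, norm_one, mul_one, mul_left_comm]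
          gcongr
  obtain ⟨C, hC⟩ := isBounded_iff_forall_norm_le.mp (hg.isBounded_range_iff_isBigO.mpr hgO)
  refine ⟨C, fun y => ?_⟩
  have hy : 0 < 1 + ‖y‖ := by positivity
  have := hC (g y) ⟨y, rfl⟩
  rw [Real.norm_eq_abs, abs_mul, abs_of_pos (Real.rpow_pos_of_pos hy ν)] at this
  rwa [Real.rpow_neg hy.le, ← div_eq_mul_inv, le_div_iff₀ (Real.rpow_pos_of_pos hy ν)]

lemma one_add_norm_smul_rpow_neg_le {E : Type*} [NormedAddCommGroup E] [NormedSpace ℝ E]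
    {c t ν : ℝ} (hc : 0 < c) (hc1 : c ≤ 1) (hct : c ≤ t) (hν : 0 ≤ ν) (y : E) :
    (1 + ‖t • y‖) ^ (-ν) ≤ c ^ (-ν) * (1 + ‖y‖) ^ (-ν) := by
  rw [← Real.mul_rpow hc.le (by positivity)]
  refine Real.rpow_le_rpow_of_nonpos (by positivity) ?_ (by linarith)
  rw [norm_smul, Real.norm_eq_abs, abs_of_pos (hc.trans_le hct)]
  nlinarith [norm_nonneg y]

lemma wlam_nonneg {N : ℕ} {s p lam : ℝ} {w : EucN N → ℝ} (hlam : 0 ≤ lam)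
    (hw : ∀ x, 0 ≤ w x) (y : EucN N) : 0 ≤ wlam s p w lam y :=
  mul_nonneg (Real.rpow_nonneg hlam _) (hw _)

lemma exists_wlam_le_of_decay {N : ℕ} {s p m M C ν : ℝ} {w : EucN N → ℝ} (hs : 0 < s)
    (hp : 1 < p) (hm : 0 < m) (hmM : m ≤ M) (hν : 0 ≤ ν) (hw0 : ∀ x, 0 ≤ w x)
    (hw : ∀ y, w y ≤ C * (1 + ‖y‖) ^ (-ν)) :
    ∃ C' ≥ 0, ∀ lam ∈ Icc m M, ∀ y, wlam s p w lam y ≤ C' * (1 + ‖y‖) ^ (-ν) := by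
  have hC : 0 ≤ C := by simpa using (hw0 0).trans (hw 0)
  have hM : 0 < M := hm.trans_le hmM
  set c := min m 1 ^ (1 / (2 * s))
  have hm1 : 0 < min m 1 := lt_min hm one_pos
  have hc : 0 < c := Real.rpow_pos_of_pos hm1 _
  have hc1 : c ≤ 1 := Real.rpow_le_one hm1.le (min_le_right _ _) (by positivity)
  refine ⟨M ^ (1 / (p - 1)) * C * c ^ (-ν), by positivity, fun lam ⟨hml, hlM⟩ y => ?_⟩
  have hlam : 0 < lam := hm.trans_le hml
  have hcl : c ≤ lam ^ (1 / (2 * s)) :=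
    Real.rpow_le_rpow hm1.le ((min_le_left _ _).trans hml) (by positivity)
  calc wlam s p w lam y ≤ M ^ (1 / (p - 1)) * (C * (c ^ (-ν) * (1 + ‖y‖) ^ (-ν))) :=
        mul_le_mul (Real.rpow_le_rpow hlam.le hlM (one_div_nonneg.mpr (by linarith)))
          ((hw _).trans (mul_le_mul_of_nonneg_left
            (one_add_norm_smul_rpow_neg_le hc hc1 hcl hν y) hC))
          (hw0 _) (by positivity)
    _ = M ^ (1 / (p - 1)) * C * c ^ (-ν) * (1 + ‖y‖) ^ (-ν) := by ring

lemma IsGroundState.exists_wlam_le {N : ℕ} {s p m M : ℝ} {w : EucN N → ℝ}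
    (hw : IsGroundState N s p w) (hs : 0 < s) (hp : 1 < p) (hm : 0 < m) (hmM : m ≤ M) :
    ∃ C ≥ 0, ∀ lam ∈ Icc m M, ∀ y,
      wlam s p w lam y ≤ C * (1 + ‖y‖) ^ (-((N : ℝ) + 2 * s)) := by
  obtain ⟨c₀, -, hlim⟩ := hw.decay
  obtain ⟨Cw, hCw⟩ :=
    exists_abs_le_mul_one_add_norm_rpow_neg hw.smooth.continuous (by positivity) hlim
  exact exists_wlam_le_of_decay hs hp hm hmM (by positivity) (fun x => (hw.pos x).le)
    fun y => (le_abs_self _).trans (hCw y)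

lemma LipschitzWith.abs_sub_le_of_abs_le {X : Type*} [PseudoMetricSpace X] {V : X → ℝ}
    {K : ℝ≥0} {M σ : ℝ} (hV : LipschitzWith K V) (hM : ∀ x, |V x| ≤ M) (hσ0 : 0 ≤ σ)
    (hσ1 : σ ≤ 1) (a b : X) : |V a - V b| ≤ (2 * M) ^ (1 - σ) * (K * dist a b) ^ σ := by
  have hbd : |V a - V b| ≤ 2 * M := by linarith [abs_sub (V a) (V b), hM a, hM b]
  have hlip : |V a - V b| ≤ K * dist a b := by simpa [Real.dist_eq] using hV.dist_le_mul a b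
  exact (le_min hbd hlip).trans
    (Real.min_le_rpow_mul_rpow ((abs_nonneg _).trans hbd) (by positivity) hσ0 hσ1)

lemma abs_sum_sub_mul_le_of_lipschitzWith {E ι : Type*} [NormedAddCommGroup E]
    [NormedSpace ℝ E] [Fintype ι] {V : E → ℝ} {K : ℝ≥0} {M σ μ ν ε C : ℝ}
    (hV : LipschitzWith K V) (hM : ∀ x, |V x| ≤ M) (hσ0 : 0 ≤ σ) (hσ1 : σ ≤ 1)
    (hexp : μ + σ ≤ ν) (hε : 0 ≤ ε) (hC : 0 ≤ C) (q : ι → E) (x : E) {a : ι → ℝ}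
    (ha : ∀ j, 0 ≤ a j) (had : ∀ j, a j ≤ C * (1 + ‖x - q j‖) ^ (-ν)) :
    |∑ j, (V (ε • q j) - V (ε • x)) * a j|
      ≤ (2 * M) ^ (1 - σ) * K ^ σ * C * ε ^ σ * ∑ j, (1 + ‖x - q j‖) ^ (-μ) := by
  have hM0 : 0 ≤ M := (abs_nonneg _).trans (hM 0)
  rw [Finset.mul_sum]
  refine (Finset.abs_sum_le_sum_abs _ _).trans (Finset.sum_le_sum fun j _ => ?_)
  set t := ‖x - q j‖
  have hdist : dist (ε • q j) (ε • x) = ε * t := by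
    rw [dist_smul₀, Real.norm_eq_abs, abs_of_nonneg hε, dist_comm, dist_eq_norm]
  calc |(V (ε • q j) - V (ε • x)) * a j|
      = |V (ε • q j) - V (ε • x)| * a j := by rw [abs_mul, abs_of_nonneg (ha j)]
    _ ≤ (2 * M) ^ (1 - σ) * (K * (ε * t)) ^ σ * (C * (1 + t) ^ (-ν)) := by
        rw [← hdist]
        exact mul_le_mul (hV.abs_sub_le_of_abs_le hM hσ0 hσ1 _ _) (had j) (ha j) (by positivity)
    _ = (2 * M) ^ (1 - σ) * K ^ σ * C * ε ^ σ * (t ^ σ * (1 + t) ^ (-ν)) := by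
        rw [Real.mul_rpow K.coe_nonneg (by positivity), Real.mul_rpow hε (norm_nonneg _)]
        ring
    _ ≤ (2 * M) ^ (1 - σ) * K ^ σ * C * ε ^ σ * (1 + t) ^ (-μ) := by
        gcongr
        exact Real.rpow_mul_one_add_rpow_neg_le (norm_nonneg _) hσ0 hexp

lemma rpow_sum_sub_sum_rpow_le_sum_erase {ι : Type*} [Fintype ι] [DecidableEq ι] {a : ι → ℝ}
    {p : ℝ} (ha : ∀ i, 0 ≤ a i) (hp : 1 ≤ p) {i₀ : ι} (hi₀ : ∀ j, a j ≤ a i₀) :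
    (∑ j, a j) ^ p - ∑ j, a j ^ p ≤ p * (Fintype.card ι : ℝ) ^ (p - 1)
      * ∑ j ∈ Finset.univ.erase i₀, a i₀ ^ (p - 1) * a j := by
  have hS : a i₀ ≤ ∑ j, a j := Finset.single_le_sum (fun j _ => ha j) (Finset.mem_univ i₀)
  have hSk : ∑ j, a j ≤ Fintype.card ι * a i₀ := by
    simpa using Finset.sum_le_sum fun j (_ : j ∈ Finset.univ) => hi₀ j
  calc (∑ j, a j) ^ p - ∑ j, a j ^ p ≤ (∑ j, a j) ^ p - a i₀ ^ p := by
        gcongr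
        exact Finset.single_le_sum (f := fun j => a j ^ p)
          (fun j _ => Real.rpow_nonneg (ha j) p) (Finset.mem_univ i₀)
    _ ≤ p * (∑ j, a j) ^ (p - 1) * (∑ j, a j - a i₀) :=
        Real.rpow_sub_rpow_le_mul (ha i₀) hS hp
    _ ≤ p * (Fintype.card ι * a i₀) ^ (p - 1) * (∑ j, a j - a i₀) := by
        have := Finset.sum_nonneg fun j (_ : j ∈ Finset.univ) => ha j
        gcongr
    _ = p * (Fintype.card ι : ℝ) ^ (p - 1)
          * ∑ j ∈ Finset.univ.erase i₀, a i₀ ^ (p - 1) * a j := by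
        rw [Real.mul_rpow (Nat.cast_nonneg _) (ha i₀), ← Finset.mul_sum,
          ← Finset.add_sum_erase _ a (Finset.mem_univ i₀)]
        ring

lemma rpow_sum_sub_sum_rpow_le_of_separated {ι : Type*} [Fintype ι] [Nonempty ι]
    {a d : ι → ℝ} {p C R μ ν : ℝ} (hp : 1 ≤ p) (hC : 0 ≤ C) (hR : 0 < R)
    (hμ : 0 ≤ μ) (hμν : μ ≤ ν) (ha : ∀ i, 0 ≤ a i) (hd : ∀ i, 1 ≤ d i)
    (had : ∀ i, a i ≤ C * d i ^ (-ν))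
    (hsep : ∀ i j, i ≠ j → R ≤ d i + d j) :
    (∑ j, a j) ^ p - ∑ j, a j ^ p ≤ p * (Fintype.card ι : ℝ) ^ (p - 1) * Fintype.card ι
      * C ^ p * 2 ^ (ν - μ) * R ^ (μ - ν) * ∑ j, d j ^ (-μ) := by
  classical
  obtain ⟨i₀, hi₀⟩ := Finite.exists_max a
  set B := C ^ p * 2 ^ (ν - μ) * R ^ (μ - ν) * ∑ j, d j ^ (-μ) with hBdef
  have hd0 : ∀ i, 0 < d i := fun i => one_pos.trans_le (hd i)
  have hnn : ∀ i ∈ Finset.univ, 0 ≤ d i ^ (-μ) := fun i _ => Real.rpow_nonneg (hd0 i).le _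
  have hpair : ∀ j ∈ Finset.univ.erase i₀, a i₀ ^ (p - 1) * a j ≤ B := by
    intro j hj
    have hA : a i₀ ≤ C := (had i₀).trans
      (mul_le_of_le_one_right hC (Real.rpow_le_one_of_one_le_of_nonpos (hd i₀) (by linarith)))
    -- `a j ≤ a i₀` lets `a j` decay like whichever of `d i₀`, `d j` is larger
    have hB : a j ≤ C * max (d i₀) (d j) ^ (-ν) := by
      rcases le_total (d i₀) (d j) with h | h
      · rw [max_eq_right h]; exact had j
      · rw [max_eq_left h]; exact (hi₀ j).trans (had i₀)
    have hmin : min (d i₀) (d j) ^ (-μ) ≤ ∑ j, d j ^ (-μ) := by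
      rcases min_choice (d i₀) (d j) with h | h <;> rw [h] <;>
        exact Finset.single_le_sum hnn (Finset.mem_univ _)
    have hCp : C ^ p = C ^ (p - 1) * C := by
      rw [← Real.rpow_add_one' hC (by linarith), sub_add_cancel]
    have hsep' := hsep i₀ j (Finset.ne_of_mem_erase hj).symm
    calc a i₀ ^ (p - 1) * a j ≤ C ^ (p - 1) * (C * max (d i₀) (d j) ^ (-ν)) :=
          mul_le_mul (Real.rpow_le_rpow (ha i₀) hA (by linarith)) hB (ha j) (by positivity)
      _ ≤ C ^ (p - 1) * (C * (2 ^ (ν - μ) * R ^ (μ - ν) * ∑ j, d j ^ (-μ))) := by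
          gcongr
          exact (Real.max_rpow_neg_le (hd0 i₀) (hd0 j) hR hsep' hμ hμν).trans (by gcongr)
      _ = B := by rw [hBdef, hCp]; ring
  calc (∑ j, a j) ^ p - ∑ j, a j ^ p
      ≤ p * (Fintype.card ι : ℝ) ^ (p - 1)
          * ∑ j ∈ Finset.univ.erase i₀, a i₀ ^ (p - 1) * a j :=
        rpow_sum_sub_sum_rpow_le_sum_erase ha hp hi₀
    _ ≤ p * (Fintype.card ι : ℝ) ^ (p - 1) * (Fintype.card ι * B) := by
        gcongr
        refine (Finset.sum_le_card_nsmul _ _ B hpair).trans ?_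
        rw [nsmul_eq_mul]
        have := Finset.sum_nonneg hnn
        gcongr
        exact Finset.card_erase_le
    _ = _ := by ring

section Weighted

variable {N k : ℕ} {μ ν C : ℝ} {q : Fin k → EucN N} {x : EucN N} {a : Fin k → ℝ}

lemma abs_sum_sub_mul_le_rho {V : EucN N → ℝ} {K : ℝ≥0} {M σ ε : ℝ}
    (hV : LipschitzWith K V) (hM : ∀ x, |V x| ≤ M) (hσ0 : 0 ≤ σ) (hσ1 : σ ≤ 1)
    (hexp : 0 < N → μ + σ ≤ ν) (hε : 0 ≤ ε) (hC : 0 ≤ C) (ha : ∀ j, 0 ≤ a j)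
    (had : ∀ j, a j ≤ C * (1 + ‖x - q j‖) ^ (-ν)) :
    |∑ j, (V (ε • q j) - V (ε • x)) * a j|
      ≤ (2 * M) ^ (1 - σ) * K ^ σ * C * ε ^ σ * rho μ q x := by
  rcases N.eq_zero_or_pos with rfl | hN
  · have hM0 : 0 ≤ M := (abs_nonneg _).trans (hM 0)
    have hρ : 0 ≤ rho μ q x := Finset.sum_nonneg fun j _ => by positivity
    simp [Subsingleton.elim (q _) x]
    positivity
  · exact abs_sum_sub_mul_le_of_lipschitzWith hV hM hσ0 hσ1 (hexp hN) hε hC q x ha had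

lemma abs_rpow_sum_sub_sum_rpow_le_rho {p R : ℝ} (hk : 1 ≤ k) (hp : 1 ≤ p) (hC : 0 ≤ C)
    (hR : 0 < R) (hμ : 0 ≤ μ) (hμν : μ ≤ ν)
    (hsep : ∀ i j, i ≠ j → R ≤ ‖q i - q j‖)
    (ha : ∀ j, 0 ≤ a j) (had : ∀ j, a j ≤ C * (1 + ‖x - q j‖) ^ (-ν)) :
    |(∑ j, a j) ^ p - ∑ j, a j ^ p|
      ≤ p * (k : ℝ) ^ (p - 1) * k * C ^ p * 2 ^ (ν - μ) * R ^ (μ - ν) * rho μ q x := by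
  have : Nonempty (Fin k) := ⟨⟨0, hk⟩⟩
  rw [abs_of_nonneg (sub_nonneg.mpr (Real.sum_rpow_le_rpow_sum _ ha hp))]
  have hsep' (i j) (hij : i ≠ j) : R ≤ (1 + ‖x - q i‖) + (1 + ‖x - q j‖) := by
    have := norm_sub_le_norm_sub_add_norm_sub (q i) x (q j)
    rw [norm_sub_rev (q i) x] at this
    linarith [hsep i j hij]
  simpa [rho] using rpow_sum_sub_sum_rpow_le_of_separated (d := fun j => 1 + ‖x - q j‖) hp hC
    hR hμ hμν ha (fun j => by simp) had hsep'

end Weighted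

theorem stmt16_general {N : ℕ} (s p : ℝ) (hs : 0 < s) (hp : Subcritical N s p)
    (V : EucN N → ℝ) (hV : VCond V)
    (w : EucN N → ℝ) (hw : IsGroundState N s p w)
    (k : ℕ) (hk : 1 ≤ k)
    (μ : ℝ) (hμ1 : (N : ℝ) / 2 < μ) (hμ2 : μ < ((N : ℝ) + 2 * s) / 2) :
    ∃ C > (0 : ℝ), ∃ R₀ > (0 : ℝ), ∃ ε₀ > (0 : ℝ),
      ∀ (ε R : ℝ) (q : Fin k → EucN N),
        0 < ε → ε < ε₀ → R₀ ≤ R →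
        (∀ i j, i ≠ j → R ≤ ‖q i - q j‖) →
        ∀ x, |Efun s p ε w V q x|
          ≤ C * (ε ^ min (2 * s) 1 + R ^ (μ - (N : ℝ) - 2 * s)) * rho μ q x := by
  obtain ⟨K, hK⟩ := hV.exists_lipschitzWith
  obtain ⟨-, -, ⟨M, hM⟩, ⟨m, hm, hmV⟩⟩ := hV
  have hVM : ∀ y, V y ∈ Icc m M := fun y => ⟨hmV y, (le_abs_self _).trans (hM y)⟩
  obtain ⟨C, hC, hwlam⟩ := hw.exists_wlam_le hs hp.1 hm ((hVM 0).1.trans (hVM 0).2)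
  set ν := (N : ℝ) + 2 * s
  set σ := min (2 * s) 1
  have hμ : 0 ≤ μ := (by positivity : (0 : ℝ) ≤ N / 2).trans hμ1.le
  have hexp : 0 < N → μ + σ ≤ ν := fun hN => by
    have : (1 : ℝ) ≤ N := by exact_mod_cast hN
    linarith [min_le_left (2 * s) 1, min_le_right (2 * s) 1]
  set C₁ := (2 * M) ^ (1 - σ) * K ^ σ * C
  set C₂ := p * (k : ℝ) ^ (p - 1) * k * C ^ p * 2 ^ (ν - μ)
  have hC₁ : 0 ≤ C₁ := by have := (abs_nonneg _).trans (hM 0); positivity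
  have hC₂ : 0 ≤ C₂ := by have := zero_le_one.trans hp.1.le; positivity
  refine ⟨C₁ + C₂ + 1, by positivity, 1, one_pos, 1, one_pos,
    fun ε R q hε _ hR hsep x => ?_⟩
  set a : Fin k → ℝ := fun j => wlam s p w (V (ε • q j)) (x - q j)
  have ha0 : ∀ j, 0 ≤ a j :=
    fun j => wlam_nonneg (hm.le.trans (hVM _).1) (fun x => (hw.pos x).le) _
  have ha : ∀ j, a j ≤ C * (1 + ‖x - q j‖) ^ (-ν) := fun j => hwlam _ (hVM _) _
  have hρ : 0 ≤ rho μ q x := Finset.sum_nonneg fun j _ => by positivity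
  calc |Efun s p ε w V q x|
      = |∑ j, (V (ε • q j) - V (ε • x)) * a j + ((∑ j, a j) ^ p - ∑ j, a j ^ p)| :=
        congrArg _ (add_sub_assoc _ _ _)
    _ ≤ C₁ * ε ^ σ * rho μ q x + C₂ * R ^ (μ - ν) * rho μ q x :=
        (abs_add_le _ _).trans (add_le_add
          (abs_sum_sub_mul_le_rho hK hM (by positivity) (min_le_right _ _) hexp hε.le hC ha0 ha)
          (abs_rpow_sum_sub_sum_rpow_le_rho hk hp.1.le hC (by linarith) hμ (by linarith)
            hsep ha0 ha))
    _ ≤ (C₁ + C₂ + 1) * (ε ^ σ + R ^ (μ - N - 2 * s)) * rho μ q x := by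
        rw [show μ - (N : ℝ) - 2 * s = μ - ν by ring, mul_add, add_mul]
        gcongr <;> linarith

/-- The error estimate: `‖E‖_Y ≤ C ε^{min(2s,1)} + C R^{μ-N-2s}`. -/
theorem stmt16 {N : ℕ} (s p : ℝ) (hs : 0 < s) (hs1 : s < 1) (hp : Subcritical N s p)
    (V : EucN N → ℝ) (hV : VCond V)
    (w : EucN N → ℝ) (hw : IsGroundState N s p w)
    (k : ℕ) (hk : 1 ≤ k)
    (μ : ℝ) (hμ1 : (N : ℝ) / 2 < μ) (hμ2 : μ < ((N : ℝ) + 2 * s) / 2) :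
    ∃ C > (0 : ℝ), ∃ R₀ > (0 : ℝ), ∃ ε₀ > (0 : ℝ),
      ∀ (ε R : ℝ) (q : Fin k → EucN N),
        0 < ε → ε < ε₀ → R₀ ≤ R →
        (∀ i j, i ≠ j → R ≤ ‖q i - q j‖) →
        ∀ x, |Efun s p ε w V q x|
          ≤ C * (ε ^ min (2 * s) 1 + R ^ (μ - (N : ℝ) - 2 * s)) * rho μ q x :=
  stmt16_general s p hs hp V hV w hw k hk μ hμ1 hμ2
end
end

section
/- Let 0<s<1, p>1 with p(N+2s)>N, and let w be a positive radial continuous function on ℝ^N with w∈L^∞ and lim_{|x|→∞} w(x)|x|^{N+2s} = c_0 > 0. Fix λ_i, λ_j > 0 and set w_λ(x) = λ^{1/(p-1)}w(λ^{1/(2s)}x). Then, as |q_i-q_j| → ∞, ∫_{ℝ^N} w_{λ_j}(x-q_j)^p w_{λ_i}(x-q_i) dx = c_0 λ_i^{1/(p-1)-(N+2s)/(2s)} λ_j^{p/(p-1)-N/(2s)} (∫_{ℝ^N}w^p) · |q_i-q_j|^{-(N+2s)} · (1+o(1)). -/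
open MeasureTheory Filter Set Metric Bornology Topology

noncomputable section

/-!
After rescaling, the integral becomes `|q|^{N+2s} ∫ w(y)^p w(c y - t q) dy` with `q = q_i - q_j`.
Split it at the ball `|y| < t|q|/(2c)`. On the ball `|c y - t q| ≥ t|q|/2`, so
`w(c y - t q) |q|^{N+2s}` is bounded and tends to `c₀ t^{-(N+2s)}` pointwise; dominated
convergence against `w^p` gives the main term. Off the ball, `w(y)^p ≤ C |q|^{-(N+2s)p}`, and
since `∫ w(c y - t q) dy` does not depend on `q`, that part is `O(|q|^{-(N+2s)(p-1)}) → 0`.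
-/

open Module

instance {E : Type*} [SeminormedAddGroup E] : (cobounded E).IsCountablyGenerated := by
  rw [← comap_norm_atTop]
  infer_instance

section Decay

variable {E : Type*} [NormedAddCommGroup E] {w : E → ℝ} {K M r c₀ t : ℝ}

lemma exists_abs_le_mul_one_add_norm_rpow_neg_s18 (hr : 0 ≤ r) (hM : ∀ x, |w x| ≤ M)
    (hdecay : Tendsto (fun x => w x * ‖x‖ ^ r) (cobounded E) (𝓝 c₀)) :
    ∃ K, ∀ x, |w x| ≤ K * (1 + ‖x‖) ^ (-r) := by
  obtain ⟨R, hR⟩ : ∃ R, ∀ x : E, R ≤ ‖x‖ → |w x| * ‖x‖ ^ r ≤ |c₀| + 1 := by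
    have h := hdecay.abs.eventually (eventually_le_nhds (lt_add_one |c₀|))
    rw [← comap_norm_atTop, eventually_comap, eventually_atTop] at h
    obtain ⟨R, hR⟩ := h
    refine ⟨R, fun x hx => ?_⟩
    simpa [abs_mul, Real.abs_rpow_of_nonneg (norm_nonneg x)] using hR ‖x‖ hx x rfl
  set R' := max R 1
  refine ⟨max (M * (1 + R') ^ r) ((|c₀| + 1) * 2 ^ r), fun x => ?_⟩
  have hx1 : 0 < 1 + ‖x‖ := by positivity
  rw [Real.rpow_neg hx1.le, ← div_eq_mul_inv, le_div_iff₀ (by positivity)]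
  rcases le_or_gt ‖x‖ R' with hx | hx
  · refine le_trans ?_ (le_max_left _ _)
    exact mul_le_mul (hM x) (by gcongr) (by positivity) ((abs_nonneg _).trans (hM 0))
  · refine le_trans ?_ (le_max_right _ _)
    have h1 : (1 : ℝ) ≤ ‖x‖ := (le_max_right R 1).trans hx.le
    calc |w x| * (1 + ‖x‖) ^ r ≤ |w x| * (2 * ‖x‖) ^ r := by gcongr; linarith
      _ = 2 ^ r * (|w x| * ‖x‖ ^ r) := by rw [Real.mul_rpow zero_le_two (norm_nonneg x)]; ring
      _ ≤ 2 ^ r * (|c₀| + 1) := by gcongr; exact hR x ((le_max_left R 1).trans hx.le)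
      _ = (|c₀| + 1) * 2 ^ r := mul_comm _ _

lemma le_mul_rpow_neg_of_le_norm (hK : ∀ x, w x ≤ K * (1 + ‖x‖) ^ (-r)) (hK0 : 0 ≤ K)
    (hr : 0 ≤ r) {ρ : ℝ} {x : E} (hρ : 0 < ρ) (hx : ρ ≤ ‖x‖) : w x ≤ K * ρ ^ (-r) :=
  (hK x).trans <| mul_le_mul_of_nonneg_left
    (Real.rpow_le_rpow_of_nonpos hρ (by linarith) (neg_nonpos.2 hr)) hK0

lemma tendsto_comp_sub_smul_mul_norm_rpow [NormedSpace ℝ E]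
    (hdecay : Tendsto (fun x => w x * ‖x‖ ^ r) (cobounded E) (𝓝 c₀)) (ht : 0 < t) (b : E) :
    Tendsto (fun q => w (b - t • q) * ‖q‖ ^ r) (cobounded E) (𝓝 (c₀ * t ^ (-r))) := by
  have hdev : ∀ q : E, |‖b - t • q‖ - t * ‖q‖| ≤ ‖b‖ := fun q => by
    simpa [norm_smul, abs_of_pos ht] using abs_norm_sub_norm_le (b - t • q) (-(t • q))
  have hratio : Tendsto (fun q => ‖b - t • q‖ / ‖q‖) (cobounded E) (𝓝 t) := by
    suffices Tendsto (fun q => ‖b - t • q‖ / ‖q‖ - t) (cobounded E) (𝓝 0) by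
      simpa using this.add_const t
    refine squeeze_zero_norm' ?_
      ((tendsto_const_nhds (x := ‖b‖)).div_atTop tendsto_norm_cobounded_atTop)
    filter_upwards [eventually_ne_cobounded 0] with q hq
    have hq' : 0 < ‖q‖ := norm_pos_iff.2 hq
    rw [Real.norm_eq_abs, div_sub' hq'.ne', abs_div, abs_of_pos hq']
    exact div_le_div_of_nonneg_right (by simpa [mul_comm] using hdev q) hq'.le
  have hz : Tendsto (fun q => b - t • q) (cobounded E) (cobounded E) := by
    rw [← tendsto_norm_atTop_iff_cobounded]
    refine tendsto_atTop_mono (fun q => ?_) (tendsto_atTop_add_const_right _ (-‖b‖)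
      (tendsto_norm_cobounded_atTop.const_mul_atTop ht))
    linarith [(abs_le.1 (hdev q)).1]
  refine ((hdecay.comp hz).mul (hratio.rpow_const (Or.inl ht.ne'))).congr' ?_
  filter_upwards [eventually_ne_cobounded 0, hz.eventually (eventually_ne_cobounded 0)]
    with q hq hzq
  have hq' : 0 < ‖q‖ := norm_pos_iff.2 hq
  have hzq' : 0 < ‖b - t • q‖ := norm_pos_iff.2 hzq
  simp only [Function.comp_apply]
  rw [Real.div_rpow hzq'.le hq'.le, Real.rpow_neg hzq'.le, Real.rpow_neg hq'.le]
  field_simp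

end Decay

section Interaction

variable {E : Type*} [NormedAddCommGroup E] [NormedSpace ℝ E] [MeasurableSpace E] [BorelSpace E]
  {μ : Measure E}
  {w : E → ℝ} {K r p c t c₀ : ℝ}

lemma integral_comp_smul_sub [FiniteDimensional ℝ E] [μ.IsAddHaarMeasure] {F : Type*}
    [NormedAddCommGroup F] [NormedSpace ℝ F] (g : E → F) {a : ℝ} (ha : 0 ≤ a) (b : E) :
    ∫ x, g (a • x - b) ∂μ = (a ^ finrank ℝ E)⁻¹ • ∫ x, g x ∂μ := by
  rw [Measure.integral_comp_smul_of_nonneg μ (fun x => g (x - b)) a (hR := ha),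
    integral_sub_right_eq_self]

lemma integrable_rpow_of_le_mul_one_add_norm_rpow_neg [FiniteDimensional ℝ E]
    [μ.IsAddHaarMeasure] (hw : Measurable w) (hw0 : ∀ x, 0 ≤ w x)
    (hK : ∀ x, w x ≤ K * (1 + ‖x‖) ^ (-r)) (hp : 0 ≤ p)
    (hrp : (finrank ℝ E : ℝ) < r * p) : Integrable (fun x => w x ^ p) μ := by
  have hK0 : 0 ≤ K := by simpa using (hw0 0).trans (hK 0)
  refine ((integrable_one_add_norm hrp).const_mul (K ^ p)).mono'
    (hw.pow_const p).aestronglyMeasurable (ae_of_all _ fun x => ?_)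
  have hx : 0 ≤ 1 + ‖x‖ := by positivity
  rw [Real.norm_of_nonneg (Real.rpow_nonneg (hw0 x) p)]
  calc w x ^ p ≤ (K * (1 + ‖x‖) ^ (-r)) ^ p := Real.rpow_le_rpow (hw0 x) (hK x) hp
    _ = K ^ p * (1 + ‖x‖) ^ (-(r * p)) := by
      rw [Real.mul_rpow hK0 (Real.rpow_nonneg hx _), ← Real.rpow_mul hx, neg_mul]

lemma tendsto_setIntegral_ball_rpow_mul_comp_smul_sub (hw : Measurable w) (hw0 : ∀ x, 0 ≤ w x)
    (hK : ∀ x, w x ≤ K * (1 + ‖x‖) ^ (-r)) (hwp : Integrable (fun x => w x ^ p) μ) (hr : 0 ≤ r)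
    (hdecay : Tendsto (fun x => w x * ‖x‖ ^ r) (cobounded E) (𝓝 c₀)) (hc : 0 < c) (ht : 0 < t) :
    Tendsto (fun q => ∫ y in ball 0 (t / (2 * c) * ‖q‖),
        w y ^ p * (w (c • y - t • q) * ‖q‖ ^ r) ∂μ)
      (cobounded E) (𝓝 ((∫ y, w y ^ p ∂μ) * (c₀ * t ^ (-r)))) := by
  have hK0 : 0 ≤ K := by simpa using (hw0 0).trans (hK 0)
  have hnear : ∀ q y, q ≠ 0 → y ∈ ball (0 : E) (t / (2 * c) * ‖q‖) →
      w (c • y - t • q) * ‖q‖ ^ r ≤ K * (t / 2) ^ (-r) := by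
    intro q y hq hy
    have hq' : 0 < ‖q‖ := norm_pos_iff.2 hq
    have hcy : c * ‖y‖ < t / 2 * ‖q‖ := by
      rw [mem_ball_zero_iff] at hy
      calc c * ‖y‖ < c * (t / (2 * c) * ‖q‖) := by gcongr
        _ = t / 2 * ‖q‖ := by field_simp
    have hz : t / 2 * ‖q‖ ≤ ‖c • y - t • q‖ := by
      have := norm_sub_norm_le (t • q) (c • y)
      rw [norm_smul, norm_smul, Real.norm_of_nonneg ht.le, Real.norm_of_nonneg hc.le,
        norm_sub_rev] at this
      linarith
    calc w (c • y - t • q) * ‖q‖ ^ r ≤ K * (t / 2 * ‖q‖) ^ (-r) * ‖q‖ ^ r := by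
          gcongr
          exact le_mul_rpow_neg_of_le_norm hK hK0 hr (by positivity) hz
      _ = K * (t / 2) ^ (-r) := by
          rw [Real.mul_rpow (by positivity) hq'.le, Real.rpow_neg hq'.le]
          field_simp
  simp_rw [← integral_indicator measurableSet_ball]
  rw [← integral_mul_const]
  refine tendsto_integral_filter_of_dominated_convergence
    (fun y => w y ^ p * (K * (t / 2) ^ (-r))) (Eventually.of_forall fun q => ?_) ?_
    (hwp.mul_const _) (ae_of_all _ fun y => ?_)
  · exact (((hw.pow_const p).mul ((hw.comp (by fun_prop)).mul_const _)).indicator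
      measurableSet_ball).aestronglyMeasurable
  · filter_upwards [eventually_ne_cobounded 0] with q hq
    refine ae_of_all _ fun y => ?_
    have hwyp : 0 ≤ w y ^ p := Real.rpow_nonneg (hw0 y) p
    by_cases hy : y ∈ ball (0 : E) (t / (2 * c) * ‖q‖)
    · rw [indicator_of_mem hy, Real.norm_of_nonneg
        (mul_nonneg hwyp (mul_nonneg (hw0 _) (Real.rpow_nonneg (norm_nonneg q) r)))]
      exact mul_le_mul_of_nonneg_left (hnear q y hq hy) hwyp
    · rw [indicator_of_notMem hy, norm_zero]
      positivity
  · have hmem : ∀ᶠ q in cobounded E, y ∈ ball (0 : E) (t / (2 * c) * ‖q‖) := by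
      refine (tendsto_norm_cobounded_atTop.eventually_gt_atTop (2 * c * ‖y‖ / t)).mono
        fun q hq => ?_
      rw [mem_ball_zero_iff]
      rw [div_lt_iff₀ ht] at hq
      calc ‖y‖ = 2 * c * ‖y‖ / (2 * c) := by field_simp
        _ < ‖q‖ * t / (2 * c) := by gcongr
        _ = t / (2 * c) * ‖q‖ := by ring
    refine ((tendsto_comp_sub_smul_mul_norm_rpow hdecay ht (c • y)).const_mul (w y ^ p)).congr' ?_
    filter_upwards [hmem] with q hq
    rw [indicator_of_mem hq]

lemma tendsto_setIntegral_compl_ball_rpow_mul_comp_smul_sub [FiniteDimensional ℝ E]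
    [μ.IsAddHaarMeasure] (hw0 : ∀ x, 0 ≤ w x)
    (hK : ∀ x, w x ≤ K * (1 + ‖x‖) ^ (-r)) (hw1 : Integrable w μ) (hr : 0 < r) (hp : 1 < p)
    (hc : 0 < c) (ht : 0 < t) :
    Tendsto (fun q => ∫ y in (ball 0 (t / (2 * c) * ‖q‖))ᶜ,
        w y ^ p * (w (c • y - t • q) * ‖q‖ ^ r) ∂μ) (cobounded E) (𝓝 0) := by
  have hK0 : 0 ≤ K := by simpa using (hw0 0).trans (hK 0)
  set D := t / (2 * c)
  set C := (K * D ^ (-r)) ^ p * ((c ^ finrank ℝ E)⁻¹ * ∫ y, w y ∂μ)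
  have hfar : ∀ q : E, q ≠ 0 → ∫ y in (ball 0 (D * ‖q‖))ᶜ,
      w y ^ p * (w (c • y - t • q) * ‖q‖ ^ r) ∂μ ≤ C * ‖q‖ ^ (-(r * (p - 1))) := by
    intro q hq
    have hq' : 0 < ‖q‖ := norm_pos_iff.2 hq
    have hDq : 0 < D * ‖q‖ := by positivity
    set B := (K * (D * ‖q‖) ^ (-r)) ^ p * ‖q‖ ^ r
    have hB : 0 ≤ B := by positivity
    have hint : Integrable (fun y => B * w (c • y - t • q)) μ :=
      (((hw1.comp_sub_right (t • q)).comp_smul hc.ne').const_mul B)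
    calc _ ≤ ∫ y in (ball 0 (D * ‖q‖))ᶜ, B * w (c • y - t • q) ∂μ := by
          refine integral_mono_of_nonneg (ae_of_all _ fun y => ?_) hint.integrableOn
            (ae_restrict_of_forall_mem measurableSet_ball.compl fun y hy => ?_)
          · exact mul_nonneg (Real.rpow_nonneg (hw0 y) p)
              (mul_nonneg (hw0 _) (Real.rpow_nonneg hq'.le r))
          · have hwy := le_mul_rpow_neg_of_le_norm hK hK0 hr.le hDq (by simpa using hy)
            calc w y ^ p * (w (c • y - t • q) * ‖q‖ ^ r)
                ≤ (K * (D * ‖q‖) ^ (-r)) ^ p * (w (c • y - t • q) * ‖q‖ ^ r) :=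
                  mul_le_mul_of_nonneg_right (Real.rpow_le_rpow (hw0 y) hwy (by linarith))
                    (mul_nonneg (hw0 _) (Real.rpow_nonneg hq'.le r))
              _ = B * w (c • y - t • q) := by ring
      _ ≤ ∫ y, B * w (c • y - t • q) ∂μ :=
          setIntegral_le_integral hint (ae_of_all _ fun y => mul_nonneg hB (hw0 _))
      _ = C * ‖q‖ ^ (-(r * (p - 1))) := by
          have hKD : 0 ≤ K * D ^ (-r) := by positivity
          rw [integral_const_mul, integral_comp_smul_sub (fun y => w y) hc.le, smul_eq_mul]
          simp only [B, C]
          rw [Real.mul_rpow (by positivity) hq'.le, ← mul_assoc K,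
            Real.mul_rpow hKD (Real.rpow_nonneg hq'.le _), ← Real.rpow_mul hq'.le,
            show -(r * (p - 1)) = -r * p + r by ring, Real.rpow_add hq']
          ring
  refine tendsto_of_tendsto_of_tendsto_of_le_of_le' tendsto_const_nhds ?_
    (Eventually.of_forall fun q => setIntegral_nonneg measurableSet_ball.compl fun y _ => ?_)
    ((eventually_ne_cobounded 0).mono hfar)
  · simpa using ((tendsto_rpow_neg_atTop (by nlinarith)).comp
      tendsto_norm_cobounded_atTop).const_mul C
  · exact mul_nonneg (Real.rpow_nonneg (hw0 y) p)
      (mul_nonneg (hw0 _) (Real.rpow_nonneg (norm_nonneg q) r))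

theorem tendsto_norm_rpow_mul_integral_rpow_mul_comp_smul_sub [FiniteDimensional ℝ E]
    [μ.IsAddHaarMeasure] (hw : Measurable w) (hw0 : ∀ x, 0 ≤ w x)
    (hK : ∀ x, w x ≤ K * (1 + ‖x‖) ^ (-r))
    (hdecay : Tendsto (fun x => w x * ‖x‖ ^ r) (cobounded E) (𝓝 c₀))
    (hr : (finrank ℝ E : ℝ) < r) (hp : 1 < p) (hc : 0 < c) (ht : 0 < t) :
    Tendsto (fun q => ‖q‖ ^ r * ∫ y, w y ^ p * w (c • y - t • q) ∂μ) (cobounded E)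
      (𝓝 (c₀ * t ^ (-r) * ∫ y, w y ^ p ∂μ)) := by
  have hr0 : 0 < r := (Nat.cast_nonneg _).trans_lt hr
  have hK0 : 0 ≤ K := by simpa using (hw0 0).trans (hK 0)
  have hw1 : Integrable w μ := by
    simpa using integrable_rpow_of_le_mul_one_add_norm_rpow_neg (μ := μ) hw hw0 hK zero_le_one
      (by simpa using hr)
  have hwp : Integrable (fun y => w y ^ p) μ :=
    integrable_rpow_of_le_mul_one_add_norm_rpow_neg hw hw0 hK (by linarith) (by nlinarith)
  have hwK : ∀ x, w x ≤ K := fun x => (hK x).trans <| mul_le_of_le_one_right hK0 <|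
    Real.rpow_le_one_of_one_le_of_nonpos (by simp) (by linarith)
  have hsplit : ∀ q, ‖q‖ ^ r * ∫ y, w y ^ p * w (c • y - t • q) ∂μ =
      (∫ y in ball 0 (t / (2 * c) * ‖q‖), w y ^ p * (w (c • y - t • q) * ‖q‖ ^ r) ∂μ) +
        ∫ y in (ball 0 (t / (2 * c) * ‖q‖))ᶜ, w y ^ p * (w (c • y - t • q) * ‖q‖ ^ r) ∂μ := by
    intro q
    rw [integral_add_compl measurableSet_ball, ← integral_const_mul]
    · congr 1 with y
      ring
    refine hwp.mul_bdd ((hw.comp (by fun_prop)).mul_const _).aestronglyMeasurable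
      (c := K * ‖q‖ ^ r) (ae_of_all _ fun y => ?_)
    rw [Real.norm_of_nonneg (mul_nonneg (hw0 _) (Real.rpow_nonneg (norm_nonneg q) r))]
    exact mul_le_mul_of_nonneg_right (hwK _) (Real.rpow_nonneg (norm_nonneg q) r)
  have hlim := (tendsto_setIntegral_ball_rpow_mul_comp_smul_sub hw hw0 hK hwp hr0.le hdecay hc
    ht).add (tendsto_setIntegral_compl_ball_rpow_mul_comp_smul_sub hw0 hK hw1 hr0 hp hc ht)
  rw [add_zero, mul_comm (∫ y, w y ^ p ∂μ)] at hlim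
  exact hlim.congr fun q => (hsplit q).symm

lemma integral_rpow_comp_smul_sub_mul_comp_smul_sub [FiniteDimensional ℝ E] [μ.IsAddHaarMeasure]
    (w : E → ℝ) (p : ℝ) {a b : ℝ} (ha : 0 < a) (u v : E) :
    ∫ x, w (a • (x - v)) ^ p * w (b • (x - u)) ∂μ =
      (a ^ finrank ℝ E)⁻¹ * ∫ y, w y ^ p * w ((b / a) • y - b • (u - v)) ∂μ := by
  rw [← smul_eq_mul, ← integral_comp_smul_sub _ ha.le (a • v)]
  congr 1 with x
  rw [← smul_sub, smul_smul, div_mul_cancel₀ _ ha.ne', ← smul_sub, sub_sub_sub_cancel_right]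

end Interaction

lemma integral_wlam_rpow_mul_wlam {N : ℕ} {s p : ℝ} {w : EucN N → ℝ} (hw0 : ∀ x, 0 ≤ w x)
    {li lj : ℝ} (hlj : 0 < lj) (qi qj : EucN N) :
    ∫ x, wlam s p w lj (x - qj) ^ p * wlam s p w li (x - qi) =
      lj ^ (1 / (p - 1) * p) * li ^ (1 / (p - 1)) * ((lj ^ (1 / (2 * s))) ^ N)⁻¹ *
        ∫ y, w y ^ p * w ((li ^ (1 / (2 * s)) / lj ^ (1 / (2 * s))) • y -
          li ^ (1 / (2 * s)) • (qi - qj)) := by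
  have hprod : ∀ x, wlam s p w lj (x - qj) ^ p * wlam s p w li (x - qi) =
      lj ^ (1 / (p - 1) * p) * li ^ (1 / (p - 1)) *
        (w (lj ^ (1 / (2 * s)) • (x - qj)) ^ p * w (li ^ (1 / (2 * s)) • (x - qi))) := fun x => by
    rw [wlam, wlam, Real.mul_rpow (Real.rpow_nonneg hlj.le _) (hw0 _), ← Real.rpow_mul hlj.le]
    ring
  rw [integral_congr_ae (ae_of_all _ hprod), integral_const_mul,
    integral_rpow_comp_smul_sub_mul_comp_smul_sub _ _ (Real.rpow_pos_of_pos hlj _),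
    finrank_euclideanSpace_fin]
  ring

theorem stmt18_general {N : ℕ} (s p : ℝ) (hs : 0 < s) (hp : 1 < p)
    (w : EucN N → ℝ) (hwc : Continuous w) (hwpos : ∀ x, 0 < w x)
    (hwbdd : ∃ M, ∀ x, |w x| ≤ M)
    (c₀ : ℝ)
    (hdecay : Tendsto (fun x : EucN N => w x * ‖x‖ ^ ((N : ℝ) + 2 * s))
      (cocompact (EucN N)) (𝓝 c₀))
    (li lj : ℝ) (hli : 0 < li) (hlj : 0 < lj) :
    Tendsto
      (fun qq : EucN N × EucN N =>
        ‖qq.1 - qq.2‖ ^ ((N : ℝ) + 2 * s) *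
          ∫ x : EucN N, wlam s p w lj (x - qq.2) ^ p * wlam s p w li (x - qq.1))
      (comap (fun qq : EucN N × EucN N => ‖qq.1 - qq.2‖) atTop)
      (𝓝 (c₀ * li ^ (1 / (p - 1) - ((N : ℝ) + 2 * s) / (2 * s))
        * lj ^ (p / (p - 1) - (N : ℝ) / (2 * s)) * ∫ x : EucN N, w x ^ p)) := by
  set r := (N : ℝ) + 2 * s
  rw [← cobounded_eq_cocompact] at hdecay
  obtain ⟨M, hM⟩ := hwbdd
  obtain ⟨K, hK⟩ := exists_abs_le_mul_one_add_norm_rpow_neg_s18 (by positivity) hM hdecay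
  have hkey := tendsto_norm_rpow_mul_integral_rpow_mul_comp_smul_sub (μ := volume)
    hwc.measurable (fun x => (hwpos x).le) (fun x => (le_abs_self _).trans (hK x)) hdecay
    (by simp [r]; linarith) hp (c := li ^ (1 / (2 * s)) / lj ^ (1 / (2 * s)))
    (t := li ^ (1 / (2 * s))) (by positivity) (by positivity)
  have hsub : Tendsto (fun qq : EucN N × EucN N => qq.1 - qq.2)
      (comap (fun qq => ‖qq.1 - qq.2‖) atTop) (cobounded (EucN N)) := by
    rw [← comap_norm_atTop, tendsto_comap_iff]
    exact tendsto_comap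
  have hpow_i : li ^ (1 / (p - 1) - r / (2 * s)) =
      li ^ (1 / (p - 1)) * (li ^ (1 / (2 * s))) ^ (-r) := by
    rw [← Real.rpow_mul hli.le, ← Real.rpow_add hli]
    congr 1
    field_simp
    ring
  have hpow_j : lj ^ (p / (p - 1) - N / (2 * s)) =
      lj ^ (1 / (p - 1) * p) * ((lj ^ (1 / (2 * s))) ^ N)⁻¹ := by
    rw [← Real.rpow_natCast, ← Real.rpow_mul hlj.le, ← Real.rpow_neg hlj.le, ← Real.rpow_add hlj]
    congr 1
    field_simp
    ring
  convert (hkey.comp hsub).const_mul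
    (lj ^ (1 / (p - 1) * p) * li ^ (1 / (p - 1)) * ((lj ^ (1 / (2 * s))) ^ N)⁻¹) using 2
  · simp only [Function.comp_apply, integral_wlam_rpow_mul_wlam (fun x => (hwpos x).le) hlj]
    ring
  · rw [hpow_i, hpow_j]
    ring

/-- Interaction estimate: as `|q_i - q_j| → ∞`,
`∫ w_{λ_j}(x-q_j)^p w_{λ_i}(x-q_i) dx
  = c₀ λ_i^{1/(p-1)-(N+2s)/(2s)} λ_j^{p/(p-1)-N/(2s)} (∫w^p) |q_i-q_j|^{-(N+2s)} (1+o(1))`. -/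
theorem stmt18 {N : ℕ} (s p : ℝ) (hs : 0 < s) (hs1 : s < 1) (hp : 1 < p)
    (hpN : (N : ℝ) < p * ((N : ℝ) + 2 * s))
    (w : EucN N → ℝ) (hwc : Continuous w) (hwpos : ∀ x, 0 < w x)
    (hwrad : ∀ x y : EucN N, ‖x‖ = ‖y‖ → w x = w y)
    (hwbdd : ∃ M, ∀ x, |w x| ≤ M)
    (c₀ : ℝ) (hc₀ : 0 < c₀)
    (hdecay : Tendsto (fun x : EucN N => w x * ‖x‖ ^ ((N : ℝ) + 2 * s))
      (cocompact (EucN N)) (𝓝 c₀))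
    (li lj : ℝ) (hli : 0 < li) (hlj : 0 < lj) :
    Tendsto
      (fun qq : EucN N × EucN N =>
        ‖qq.1 - qq.2‖ ^ ((N : ℝ) + 2 * s) *
          ∫ x : EucN N, wlam s p w lj (x - qq.2) ^ p * wlam s p w li (x - qq.1))
      (comap (fun qq : EucN N × EucN N => ‖qq.1 - qq.2‖) atTop)
      (𝓝 (c₀ * li ^ (1 / (p - 1) - ((N : ℝ) + 2 * s) / (2 * s))
        * lj ^ (p / (p - 1) - (N : ℝ) / (2 * s)) * ∫ x : EucN N, w x ^ p)) :=
  stmt18_general s p hs hp w hwc hwpos hwbdd c₀ hdecay li lj hli hlj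
end
end
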